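/- arXiv:1701.06405 — 2 statements merged into one kernel-verified Lean document; each statement's English description precedes it below -/
import Mathlib

section
/- Fix integers s ≥ 1 and d. The map J ↦ (α_1(J,d)+1, …, α_s(J,d)+1), where α_t(J,d) = j_t + Σ_{l>t} 2^{l−(t+1)} j_l + 2^{s−t} d, restricts to a bijection from the set of strictly decreasing sequences J ∈ ℕ^s (j_1 > j_2 > ⋯ > j_s ≥ 0) onto the set of admissible sequences I ∈ ℤ^s with i_s > d. -/
/-!
Since `α_s = j_s + d` and `α_t = j_t - j_{t+1} + 2 α_{t+1}` for `t < s`, the sequence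
`i_t = α_t + 1` satisfies `i_t - 2 i_{t+1} = j_t - j_{t+1} - 1` and `i_s - d = j_s + 1`.
So `J` is strictly decreasing in `ℕ` exactly when `I` is admissible with `i_s > d`, and these
relations determine `J` from `I` by downward recursion from `t = s`.
-/

/-- The upper index `α_t(J, d)` obtained from the lower-indexed Dyer-Lashof
monomial `Q_{j_1} ⋯ Q_{j_s}` applied to a class of degree `d`. -/
def alphaSeq (J : ℕ → ℕ) (d : ℤ) (s t : ℕ) : ℤ :=
  (J t : ℤ) + ∑ l ∈ Finset.Icc (t + 1) s, 2 ^ (l - (t + 1)) * (J l : ℤ) + 2 ^ (s - t) * d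

open Finset

section alphaSeq

variable (J : ℕ → ℕ) (d : ℤ) {s t : ℕ}

lemma alphaSeq_self (s : ℕ) : alphaSeq J d s s = J s + d := by
  simp [alphaSeq]

lemma alphaSeq_of_lt (h : t < s) :
    alphaSeq J d s t = J t - J (t + 1) + 2 * alphaSeq J d s (t + 1) := by
  have hIcc : Icc (t + 1) s = insert (t + 1) (Icc (t + 2) s) := by
    ext l; simp only [mem_insert, mem_Icc]; omega
  have hsum : ∑ l ∈ Icc (t + 2) s, (2 : ℤ) ^ (l - (t + 1)) * J l =
      2 * ∑ l ∈ Icc (t + 2) s, (2 : ℤ) ^ (l - (t + 2)) * J l := by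
    rw [mul_sum]
    refine sum_congr rfl fun l hl => ?_
    rw [show l - (t + 1) = l - (t + 2) + 1 by grind, pow_succ]
    ring
  have hpow : (2 : ℤ) ^ (s - t) = 2 * 2 ^ (s - (t + 1)) := by
    rw [show s - t = s - (t + 1) + 1 by omega, pow_succ, mul_comm]
  rw [alphaSeq, alphaSeq, hIcc, sum_insert (by simp), hsum, hpow, Nat.sub_self, pow_zero]
  ring

lemma eq_of_alphaSeq_eq {K : ℕ → ℕ}
    (hJK : ∀ t, 1 ≤ t → t ≤ s → alphaSeq J d s t = alphaSeq K d s t) :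
    ∀ t, 1 ≤ t → t ≤ s → J t = K t := by
  intro t ht hts
  induction hts using Nat.decreasingInduction with
  | self => simpa [alphaSeq_self] using hJK s ht le_rfl
  | of_succ t hts ih =>
    have h := hJK t ht hts.le
    rw [alphaSeq_of_lt J d hts, alphaSeq_of_lt K d hts, ih (by omega),
      hJK (t + 1) (by omega) hts] at h
    omega

end alphaSeq

section lowerSeq

variable (I : ℕ → ℤ) (d : ℤ) {s t : ℕ}

/-- The solution `j_t` of `α_s = j_s + d`, `α_t = j_t - j_{t+1} + 2 α_{t+1}` with `α_t = i_t - 1`. -/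
def lowerSeq (s t : ℕ) : ℤ :=
  I s - 1 - d + ∑ l ∈ Ico t s, (I l - 2 * I (l + 1) + 1)

lemma lowerSeq_self (s : ℕ) : lowerSeq I d s s = I s - 1 - d := by
  simp [lowerSeq]

lemma lowerSeq_of_lt (h : t < s) :
    lowerSeq I d s t = lowerSeq I d s (t + 1) + (I t - 2 * I (t + 1) + 1) := by
  rw [lowerSeq, lowerSeq, sum_eq_sum_Ico_succ_bot h]
  ring

variable {I d}

lemma lowerSeq_nonneg (hadm : ∀ t, 1 ≤ t → t < s → 2 * I (t + 1) ≤ I t) (hd : d < I s)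
    (ht : 1 ≤ t) : 0 ≤ lowerSeq I d s t := by
  have hsum : 0 ≤ ∑ l ∈ Ico t s, (I l - 2 * I (l + 1) + 1) :=
    sum_nonneg fun l hl => by
      have := hadm l (by grind) (by grind)
      omega
  rw [lowerSeq]
  omega

end lowerSeq

section inverse

variable {I : ℕ → ℤ} {d : ℤ} {s : ℕ}
  (hadm : ∀ t, 1 ≤ t → t < s → 2 * I (t + 1) ≤ I t) (hd : d < I s)
include hadm hd

lemma lowerSeq_toNat_succ_lt {t : ℕ} (ht : 1 ≤ t) (hts : t < s) :
    (lowerSeq I d s (t + 1)).toNat < (lowerSeq I d s t).toNat := by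
  have := hadm t ht hts
  have := lowerSeq_nonneg hadm hd (t := t + 1) (by omega)
  rw [lowerSeq_of_lt I d hts]
  omega

lemma alphaSeq_lowerSeq_toNat {t : ℕ} (ht : 1 ≤ t) (hts : t ≤ s) :
    alphaSeq (fun t => (lowerSeq I d s t).toNat) d s t + 1 = I t := by
  induction hts using Nat.decreasingInduction with
  | self =>
    rw [alphaSeq_self, Int.toNat_of_nonneg (lowerSeq_nonneg hadm hd ht), lowerSeq_self]
    ring
  | of_succ t hts ih =>
    rw [alphaSeq_of_lt _ d hts]
    simp only [Int.toNat_of_nonneg (lowerSeq_nonneg hadm hd ht),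
      Int.toNat_of_nonneg (lowerSeq_nonneg hadm hd (t := t + 1) (by omega))]
    rw [lowerSeq_of_lt I d hts]
    linarith [ih (by omega)]

end inverse

theorem phi_bijection_general (s : ℕ) (d : ℤ) :
    (∀ J : ℕ → ℕ, (∀ t, 1 ≤ t → t < s → J (t + 1) < J t) →
        ((∀ t, 1 ≤ t → t < s →
            2 * (alphaSeq J d s (t + 1) + 1) ≤ alphaSeq J d s t + 1) ∧
          d < alphaSeq J d s s + 1)) ∧
      (∀ I : ℕ → ℤ, (∀ t, 1 ≤ t → t < s → 2 * I (t + 1) ≤ I t) → d < I s →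
        (∃ J : ℕ → ℕ, (∀ t, 1 ≤ t → t < s → J (t + 1) < J t) ∧
            ∀ t, 1 ≤ t → t ≤ s → alphaSeq J d s t + 1 = I t) ∧
          (∀ J K : ℕ → ℕ,
            (∀ t, 1 ≤ t → t ≤ s → alphaSeq J d s t + 1 = I t) →
            (∀ t, 1 ≤ t → t ≤ s → alphaSeq K d s t + 1 = I t) →
            ∀ t, 1 ≤ t → t ≤ s → J t = K t)) := by
  refine ⟨fun J hJ => ⟨fun t ht hts => ?_, ?_⟩, fun I hadm hd => ⟨?_, ?_⟩⟩
  · have := hJ t ht hts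
    rw [alphaSeq_of_lt J d hts]
    omega
  · rw [alphaSeq_self]
    omega
  · exact ⟨_, fun t => lowerSeq_toNat_succ_lt hadm hd, fun t => alphaSeq_lowerSeq_toNat hadm hd⟩
  · intro J K hJ hK
    refine eq_of_alphaSeq_eq J d fun t ht hts => ?_
    linarith [hJ t ht hts, hK t ht hts]

/-- The map `J ↦ (α_1(J,d)+1, …, α_s(J,d)+1)` is a bijection from strictly
decreasing sequences in `ℕ^s` onto admissible sequences `I ∈ ℤ^s` with `i_s > d`. -/
theorem phi_bijection (s : ℕ) (hs : 1 ≤ s) (d : ℤ) :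
    (∀ J : ℕ → ℕ, (∀ t, 1 ≤ t → t < s → J (t + 1) < J t) →
        ((∀ t, 1 ≤ t → t < s →
            2 * (alphaSeq J d s (t + 1) + 1) ≤ alphaSeq J d s t + 1) ∧
          d < alphaSeq J d s s + 1)) ∧
      (∀ I : ℕ → ℤ, (∀ t, 1 ≤ t → t < s → 2 * I (t + 1) ≤ I t) → d < I s →
        (∃ J : ℕ → ℕ, (∀ t, 1 ≤ t → t < s → J (t + 1) < J t) ∧
            ∀ t, 1 ≤ t → t ≤ s → alphaSeq J d s t + 1 = I t) ∧
          (∀ J K : ℕ → ℕ,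
            (∀ t, 1 ≤ t → t ≤ s → alphaSeq J d s t + 1 = I t) →
            (∀ t, 1 ≤ t → t ≤ s → alphaSeq K d s t + 1 = I t) →
            ∀ t, 1 ≤ t → t ≤ s → J t = K t)) :=
  phi_bijection_general s d
end

section
/- Fix an integer n ≥ 1. Every nonempty admissible sequence I = (i_1, …, i_s) of integers decomposes uniquely as a concatenation I = I' ⧺ I'' where I' has length j and I'' = ω_j I, such that: e(ω_j I) ≤ (n+1) + j whenever j < s, and i_j ≥ (n+1) + d(ω_j I) + j whenever j > 0. Consequently, for each fixed n ≥ 1 the set of admissible sequences of length s is in bijection with the disjoint union over j ∈ {0,…,s} of pairs (I', I'') where I' is admissible of length j with last entry i'_j ≥ (n+1) + d(I'') + j (condition vacuous if j = 0), I'' is admissible of length s − j with e(I'') ≤ (n+1) + j (condition on excess vacuous if j = s, interpreting e(∅) = ∞). -/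
/-!
Write `A j` for the excess condition `e(ω_j I) ≤ (n+1) + j`. Since
`e(ω_j I) = i_{j+1} - d(ω_{j+1} I)`, the cut condition `i_{j+1} ≥ (n+1) + d(ω_{j+1} I) + (j+1)`
is exactly `¬ A j`. Admissibility makes the excess decrease along truncation,
`e(ω_{j+1} I) ≤ e(ω_j I)`, so `A` is upward closed on `[0, s)`. The cut `j` is therefore the
threshold of `A`: the least `j` with `A j`, or `s` if there is none.
-/

/-- The excess `e(ω_j I)` of the `j`-fold left truncation of the sequence
`I = (i 1, …, i s)`, using the formula `e(K) = k₁ − Σ_{l ≥ 2} k_l`. -/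
def seqExcess (i : ℕ → ℤ) (j s : ℕ) : ℤ :=
  i (j + 1) - ∑ l ∈ Finset.Icc (j + 2) s, i l

section Threshold

variable {A B : ℕ → Prop} {s : ℕ}

theorem of_le_of_forall_succ (hA : ∀ j, j + 1 < s → A j → A (j + 1)) {a b : ℕ}
    (hab : a ≤ b) (hb : b < s) (ha : A a) : A b := by
  induction b, hab using Nat.le_induction with
  | base => exact ha
  | succ b _ ih => exact hA b hb (ih (by omega))

theorem le_of_threshold (hA : ∀ j, j + 1 < s → A j → A (j + 1))
    (hB : ∀ m, m < s → (B (m + 1) ↔ ¬ A m)) {j k : ℕ}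
    (hj : j < s → A j) (hks : k ≤ s) (hk : 0 < k → B k) : k ≤ j := by
  by_contra! hjk
  obtain ⟨m, rfl⟩ : ∃ m, k = m + 1 := ⟨k - 1, by omega⟩
  have hAm : A m := of_le_of_forall_succ hA (by omega) (by omega) (hj (by omega))
  exact (hB m (by omega)).mp (hk m.succ_pos) hAm

theorem existsUnique_threshold (hA : ∀ j, j + 1 < s → A j → A (j + 1))
    (hB : ∀ m, m < s → (B (m + 1) ↔ ¬ A m)) :
    ∃! j, j ≤ s ∧ (j < s → A j) ∧ (0 < j → B j) := by
  classical
  have hex : ∃ j, s ≤ j ∨ A j := ⟨s, .inl le_rfl⟩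
  have hs : Nat.find hex ≤ s := Nat.find_min' hex (.inl le_rfl)
  have hlow : Nat.find hex < s → A (Nat.find hex) := fun h =>
    (Nat.find_spec hex).resolve_left (by omega)
  have hhigh : 0 < Nat.find hex → B (Nat.find hex) := fun hpos => by
    obtain ⟨m, hm⟩ : ∃ m, Nat.find hex = m + 1 := ⟨Nat.find hex - 1, by omega⟩
    have hnot : ¬ (s ≤ m ∨ A m) := Nat.find_min hex (by omega)
    rw [hm, hB m (by omega)]
    exact fun h => hnot (.inr h)
  refine ⟨Nat.find hex, ⟨hs, hlow, hhigh⟩, fun k ⟨hks, hkA, hkB⟩ => ?_⟩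
  exact le_antisymm (le_of_threshold hA hB hlow hks hkB) (le_of_threshold hA hB hkA hs hhigh)

end Threshold

theorem seqExcess_eq_add {i : ℕ → ℤ} {j s : ℕ} (hj : j + 2 ≤ s) :
    seqExcess i j s = i (j + 1) - 2 * i (j + 2) + seqExcess i (j + 1) s := by
  rw [seqExcess, seqExcess, ← Finset.add_sum_Ioc_eq_sum_Icc hj, ← Finset.Icc_add_one_left_eq_Ioc,
    show j + 1 + 1 = j + 2 from rfl, show j + 1 + 2 = j + 2 + 1 from rfl]
  ring

theorem seqExcess_succ_le {i : ℕ → ℤ} {j s : ℕ} (hj : j + 2 ≤ s)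
    (hadm : 2 * i (j + 2) ≤ i (j + 1)) :
    seqExcess i (j + 1) s ≤ seqExcess i j s := by
  rw [seqExcess_eq_add hj]
  linarith

theorem add_sum_Icc_add_le_iff_not_seqExcess_le (n : ℤ) (i : ℕ → ℤ) (m s : ℕ) :
    (n + 1) + ∑ l ∈ Finset.Icc (m + 2) s, i l + ((m + 1 : ℕ) : ℤ) ≤ i (m + 1) ↔
      ¬ seqExcess i m s ≤ (n + 1) + m := by
  rw [seqExcess, not_le]
  push_cast
  omega

theorem unique_decomposition_delooping_general (n : ℤ)
    (s : ℕ) (i : ℕ → ℤ)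
    (hadm : ∀ j, 1 ≤ j → j < s → 2 * i (j + 1) ≤ i j) :
    ∃! j : ℕ, j ≤ s ∧
      (j < s → seqExcess i j s ≤ (n + 1) + j) ∧
      (0 < j → (n + 1) + (∑ l ∈ Finset.Icc (j + 1) s, i l) + j ≤ i j) := by
  refine existsUnique_threshold (fun j hj hA => ?_)
    (fun m _ => add_sum_Icc_add_le_iff_not_seqExcess_le n i m s)
  have hle := seqExcess_succ_le hj (hadm (j + 1) (by omega) hj)
  push_cast
  linarith

/-- Every nonempty admissible sequence `I = (i 1, …, i s)` decomposes uniquely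
as a concatenation `I' ⧺ ω_j I` with `e(ω_j I) ≤ (n+1) + j` whenever `j < s`
and `i_j ≥ (n+1) + d(ω_j I) + j` whenever `j > 0`. -/
theorem unique_decomposition_delooping (n : ℤ) (hn : 1 ≤ n)
    (s : ℕ) (hs : 1 ≤ s) (i : ℕ → ℤ)
    (hadm : ∀ j, 1 ≤ j → j < s → 2 * i (j + 1) ≤ i j) :
    ∃! j : ℕ, j ≤ s ∧
      (j < s → seqExcess i j s ≤ (n + 1) + j) ∧
      (0 < j → (n + 1) + (∑ l ∈ Finset.Icc (j + 1) s, i l) + j ≤ i j) :=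
  unique_decomposition_delooping_general n s i hadm
end
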